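/- arXiv:2604.19068 — 2 statements merged into one kernel-verified Lean document; each statement's English description precedes it below -/
import Mathlib

section
/- Suppose $\olmu > 0$, $\olM > 0$, $\delta > 0$, $h > 0$, $m \ge 1$ an integer, $\olh = h/m$, and $p \ge 1$ an integer. If $\olh \le \left(\frac{\olmu\,\delta}{\olM\,(e^{\olmu h} - 1)}\right)^{1/p}$, then $\olM\,\olh^{p+1}\cdot\frac{e^{m\olmu\olh} - 1}{e^{\olmu\olh} - 1} \le \delta$. -/
/-! Since `m * hbar = h`, the numerator is `exp (μ * h) - 1`, while the denominator satisfies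
`exp (μ * hbar) - 1 ≥ μ * hbar`. The left side is therefore at most `M * hbar ^ p * (exp (μ * h) - 1) / μ`,
and the step-size condition says exactly that this is at most `δ`. -/

open Real

lemma pow_le_of_le_rpow_one_div {x A : ℝ} {p : ℕ} (hx : 0 ≤ x) (hA : 0 ≤ A) (hp : p ≠ 0)
    (h : x ≤ A ^ ((1 : ℝ) / p)) : x ^ p ≤ A := by
  rwa [one_div, le_rpow_inv_iff_of_pos hx hA (by positivity), rpow_natCast] at h

theorem stmt2 (μ M δ h : ℝ) (m p : ℕ) (hμ : 0 < μ) (hM : 0 < M) (hδ : 0 < δ)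
    (hh : 0 < h) (hm : 1 ≤ m) (hp : 1 ≤ p) (hbar : ℝ) (hhbar : hbar = h / m)
    (hle : hbar ≤ (μ * δ / (M * (Real.exp (μ * h) - 1))) ^ ((1 : ℝ) / p)) :
    M * hbar ^ (p + 1) * ((Real.exp (m * (μ * hbar)) - 1) / (Real.exp (μ * hbar) - 1)) ≤ δ := by
  have hm0 : (0 : ℝ) < m := by exact_mod_cast hm
  have hbar_pos : 0 < hbar := by rw [hhbar]; positivity
  have hsteps : m * (μ * hbar) = μ * h := by rw [hhbar]; field_simp
  have hE : 0 < exp (μ * h) - 1 := by linarith [add_one_lt_exp (mul_pos hμ hh).ne', mul_pos hμ hh]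
  have hpow : hbar ^ p * (M * (exp (μ * h) - 1)) ≤ μ * δ :=
    (le_div_iff₀ (by positivity)).1
      (pow_le_of_le_rpow_one_div hbar_pos.le (by positivity) (by omega) hle)
  rw [hsteps]
  calc M * hbar ^ (p + 1) * ((exp (μ * h) - 1) / (exp (μ * hbar) - 1))
      ≤ M * hbar ^ (p + 1) * ((exp (μ * h) - 1) / (μ * hbar)) := by
        gcongr; linarith [add_one_le_exp (μ * hbar)]
    _ = hbar ^ p * (M * (exp (μ * h) - 1)) / μ := by field_simp; ring
    _ ≤ μ * δ / μ := by gcongr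
    _ = δ := by field_simp
end

section
/- Let $f : \mathbb{R}^n \to \mathbb{R}^n$ be continuously differentiable, and suppose $x_1, x_2 : [0,h] \to \mathbb{R}^n$ are solutions of $x' = f(x)$ whose trajectories stay in a convex set $F$ on which the symmetric part of the Jacobian of $f$ satisfies $\langle v, J_f(q) v\rangle \le \olmu \|v\|_2^2$ for all $q \in F$ and $v \in \mathbb{R}^n$. Then for all $t \in [0,h]$, $\|x_1(t) - x_2(t)\|_2 \le \|x_1(0) - x_2(0)\|_2\, e^{\olmu t}$. -/
/-! Along the segment from `b` to `a` in `F`, the mean value theorem applied to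
`s ↦ ⟪a - b, f (b + s • (a - b))⟫` turns the bound on the Jacobian into the one-sided Lipschitz
estimate `⟪a - b, f a - f b⟫ ≤ μ ‖a - b‖²`. For the difference `y = x₁ - x₂` of two solutions this
gives `(‖y‖²)' = 2 ⟪y, f x₁ - f x₂⟫ ≤ 2μ ‖y‖²`, and Grönwall's inequality yields
`‖y t‖² ≤ ‖y 0‖² e^{2μt}`. -/

open Set Real

open scoped RealInnerProductSpace

section

variable {E : Type*} [NormedAddCommGroup E] [InnerProductSpace ℝ E]

theorem Convex.inner_sub_map_sub_le_of_inner_fderiv_le {f : E → E} {F : Set E} {μ : ℝ}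
    (hF : Convex ℝ F) (hf : ∀ q ∈ F, DifferentiableAt ℝ f q)
    (hJ : ∀ q ∈ F, ∀ v, ⟪v, fderiv ℝ f q v⟫ ≤ μ * ‖v‖ ^ 2) {a b : E} (ha : a ∈ F)
    (hb : b ∈ F) : ⟪a - b, f a - f b⟫ ≤ μ * ‖a - b‖ ^ 2 := by
  set v := a - b
  have hseg : ∀ s ∈ Icc (0 : ℝ) 1, b + s • v ∈ F := fun s hs => hF.add_smul_sub_mem hb ha hs
  have hφ : ∀ s ∈ Icc (0 : ℝ) 1,
      HasDerivAt (fun s : ℝ => ⟪v, f (b + s • v)⟫) ⟪v, fderiv ℝ f (b + s • v) v⟫ s := by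
    intro s hs
    have hline : HasDerivAt (fun s : ℝ => b + s • v) v s := by
      simpa using ((hasDerivAt_id s).smul_const v).const_add b
    simpa using
      (hasDerivAt_const s v).inner ℝ ((hf _ (hseg s hs)).hasFDerivAt.comp_hasDerivAt s hline)
  obtain ⟨c, hc, hslope⟩ := exists_hasDerivAt_eq_slope _ _ zero_lt_one
    (fun s hs => (hφ s hs).continuousAt.continuousWithinAt)
    (fun s hs => hφ s (Ioo_subset_Icc_self hs))
  have hmvt : ⟪v, f a - f b⟫ = ⟪v, fderiv ℝ f (b + c • v) v⟫ := by
    rw [hslope, inner_sub_right]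
    simp [v]
  rw [hmvt]
  exact hJ _ (hseg c (Ioo_subset_Icc_self hc)) v

theorem norm_le_mul_exp_of_inner_deriv_right_le {y y' : ℝ → E} {μ a b : ℝ}
    (hy : ContinuousOn y (Icc a b)) (hy' : ∀ t ∈ Ico a b, HasDerivWithinAt y (y' t) (Ici t) t)
    (bound : ∀ t ∈ Ico a b, ⟪y t, y' t⟫ ≤ μ * ‖y t‖ ^ 2) :
    ∀ t ∈ Icc a b, ‖y t‖ ≤ ‖y a‖ * exp (μ * (t - a)) := by
  have hsq : ∀ t ∈ Icc a b, ‖y t‖ ^ 2 ≤ gronwallBound (‖y a‖ ^ 2) (2 * μ) 0 (t - a) :=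
    le_gronwallBound_of_liminf_deriv_right_le (hy.norm.pow 2)
      (fun t ht _ hr => (hy' t ht).norm_sq.liminf_right_slope_le hr) le_rfl
      (fun t ht => by linarith [bound t ht])
  intro t ht
  have hexp : exp (2 * μ * (t - a)) = exp (μ * (t - a)) ^ 2 := by
    rw [← exp_nat_mul]
    ring_nf
  refine (pow_le_pow_iff_left₀ (norm_nonneg _) (by positivity) two_ne_zero).1 ?_
  simpa only [gronwallBound_ε0, hexp, mul_pow] using hsq t ht

end

theorem stmt17_general (n : ℕ) (h μ : ℝ)
    (f : EuclideanSpace ℝ (Fin n) → EuclideanSpace ℝ (Fin n)) (hf : ContDiff ℝ 1 f)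
    (F : Set (EuclideanSpace ℝ (Fin n))) (hF : Convex ℝ F)
    (x1 x2 : ℝ → EuclideanSpace ℝ (Fin n))
    (hx1 : ∀ t ∈ Set.Icc 0 h, HasDerivAt x1 (f (x1 t)) t)
    (hx2 : ∀ t ∈ Set.Icc 0 h, HasDerivAt x2 (f (x2 t)) t)
    (hx1F : ∀ t ∈ Set.Icc 0 h, x1 t ∈ F)
    (hx2F : ∀ t ∈ Set.Icc 0 h, x2 t ∈ F)
    (hJ : ∀ q ∈ F, ∀ v : EuclideanSpace ℝ (Fin n),
      (inner ℝ v ((fderiv ℝ f q) v) : ℝ) ≤ μ * ‖v‖ ^ 2) :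
    ∀ t ∈ Set.Icc 0 h, ‖x1 t - x2 t‖ ≤ ‖x1 0 - x2 0‖ * Real.exp (μ * t) := by
  have hdiff : ∀ t ∈ Icc 0 h, HasDerivAt (fun s => x1 s - x2 s) (f (x1 t) - f (x2 t)) t :=
    fun t ht => (hx1 t ht).sub (hx2 t ht)
  have hfF : ∀ q ∈ F, DifferentiableAt ℝ f q := fun q _ => hf.differentiable one_ne_zero q
  intro t ht
  simpa using norm_le_mul_exp_of_inner_deriv_right_le
    (fun s hs => (hdiff s hs).continuousAt.continuousWithinAt)
    (fun s hs => (hdiff s (Ico_subset_Icc_self hs)).hasDerivWithinAt)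
    (fun s hs => hF.inner_sub_map_sub_le_of_inner_fderiv_le hfF hJ
      (hx1F s (Ico_subset_Icc_self hs)) (hx2F s (Ico_subset_Icc_self hs))) t ht

theorem stmt17 (n : ℕ) (h μ : ℝ) (hh : 0 < h)
    (f : EuclideanSpace ℝ (Fin n) → EuclideanSpace ℝ (Fin n)) (hf : ContDiff ℝ 1 f)
    (F : Set (EuclideanSpace ℝ (Fin n))) (hF : Convex ℝ F)
    (x1 x2 : ℝ → EuclideanSpace ℝ (Fin n))
    (hx1 : ∀ t ∈ Set.Icc 0 h, HasDerivAt x1 (f (x1 t)) t)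
    (hx2 : ∀ t ∈ Set.Icc 0 h, HasDerivAt x2 (f (x2 t)) t)
    (hx1F : ∀ t ∈ Set.Icc 0 h, x1 t ∈ F)
    (hx2F : ∀ t ∈ Set.Icc 0 h, x2 t ∈ F)
    (hJ : ∀ q ∈ F, ∀ v : EuclideanSpace ℝ (Fin n),
      (inner ℝ v ((fderiv ℝ f q) v) : ℝ) ≤ μ * ‖v‖ ^ 2) :
    ∀ t ∈ Set.Icc 0 h, ‖x1 t - x2 t‖ ≤ ‖x1 0 - x2 0‖ * Real.exp (μ * t) :=
  stmt17_general n h μ f hf F hF x1 x2 hx1 hx2 hx1F hx2F hJ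
end
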